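/- Let Q be a finite quiver with no loops and at most one arrow between any two vertices (counting both directions), such that the underlying simple graph of Q is acyclic. If ω and ω′ are two paths in the double quiver Q̄ with the same source i and the same target j, then W(ω) = W(ω′); in other words, W descends to a well-defined integer W(i, j) depending only on the endpoints. -/

import Mathlib

open Quiver

/-- The underlying simple graph of a quiver: `i` and `j` are adjacent iff they are
distinct and there is an arrow `i ⟶ j` or an arrow `j ⟶ i`. -/
def quiverGraph (V : Type*) [Quiver V] : SimpleGraph V where
  Adj a b := a ≠ b ∧ (Nonempty (a ⟶ b) ∨ Nonempty (b ⟶ a))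
  symm := ⟨fun _ _ h => ⟨h.1.symm, h.2.symm⟩⟩
  loopless := ⟨fun _ h => h.1 rfl⟩

/-- The weight of an arrow of the double quiver `Q̄ = Symmetrify V`:
`-1` for an original arrow `α ∈ Q₁` and `+1` for a reversed arrow `α* ∈ Q₁*`. -/
def edgeWeight {V : Type*} [Quiver V] {a b : Symmetrify V} (e : a ⟶ b) : ℤ :=
  match e with
  | Sum.inl _ => -1
  | Sum.inr _ => 1

/-- The weight `W(ω)` of a path `ω` in the double quiver `Q̄`:
the sum of the weights of its arrows. -/
def pathWeight {V : Type*} [Quiver V] :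
    ∀ {a b : Symmetrify V}, Path a b → ℤ
  | _, _, Path.nil => 0
  | _, _, Path.cons p e => pathWeight p + edgeWeight e

/-! Orient each edge of the underlying forest and weigh a dart `-1` if it follows an arrow of
`Q` and `+1` otherwise; by the single-arrow hypothesis this weight is antisymmetric, and `W(ω)`
is the dart sum of the walk traced by `ω`. Appending one edge to a forest path either extends
the path by that dart or deletes its reverse, so inductively `W(ω)` is the dart sum of a path
of the forest from `i` to `j`, and such a path is unique. -/

namespace SimpleGraph

variable {V A : Type*} [AddCommGroup A] {G : SimpleGraph V}

theorem IsAcyclic.sum_map_darts_of_isPath_of_adj (hG : G.IsAcyclic) {f : G.Dart → A}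
    (hf : ∀ d, f d.symm = -f d) {u v w : V} {p : G.Walk u v} {q : G.Walk u w}
    (hp : p.IsPath) (hq : q.IsPath) (hadj : G.Adj v w) :
    (q.darts.map f).sum = (p.darts.map f).sum + f ⟨(v, w), hadj⟩ := by
  by_cases hv : v ∈ q.support
  · rw [hG.path_concat hp hq hadj hv, Walk.darts_concat]
    simp
  · have hp_eq : p = q.concat hadj.symm :=
      Subtype.mk.inj <| (hG.subsingleton_path u v).elim ⟨p, hp⟩ ⟨_, hq.concat hv hadj.symm⟩
    have : f ⟨(w, v), hadj.symm⟩ = -f ⟨(v, w), hadj⟩ := hf ⟨(v, w), hadj⟩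
    rw [hp_eq, Walk.darts_concat]
    simp [this]

end SimpleGraph

section

variable {V : Type*} [Quiver V]

open Classical in
noncomputable def dartWeight (d : (quiverGraph V).Dart) : ℤ :=
  if Nonempty (d.fst ⟶ d.snd) then -1 else 1

theorem isEmpty_hom_of_hom (hsingle : ∀ a b : V, Subsingleton ((a ⟶ b) ⊕ (b ⟶ a)))
    {a b : V} (f : b ⟶ a) : IsEmpty (a ⟶ b) :=
  ⟨fun g => Sum.inl_ne_inr ((hsingle a b).elim (.inl g) (.inr f))⟩

theorem dartWeight_of_hom (hsingle : ∀ a b : V, Subsingleton ((a ⟶ b) ⊕ (b ⟶ a)))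
    (d : (quiverGraph V).Dart) (f : d.fst ⟶ d.snd) :
    dartWeight d = -1 ∧ dartWeight d.symm = 1 := by
  have := isEmpty_hom_of_hom hsingle f
  simp [dartWeight, Nonempty.intro f, this]

theorem dartWeight_symm (hsingle : ∀ a b : V, Subsingleton ((a ⟶ b) ⊕ (b ⟶ a)))
    (d : (quiverGraph V).Dart) : dartWeight d.symm = -dartWeight d := by
  rcases d.adj.2 with ⟨⟨f⟩⟩ | ⟨⟨f⟩⟩
  · obtain ⟨hd, hds⟩ := dartWeight_of_hom hsingle d f
    rw [hd, hds]; rfl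
  · obtain ⟨hds, hd⟩ := dartWeight_of_hom hsingle d.symm f
    rw [SimpleGraph.Dart.symm_symm] at hd
    rw [hd, hds]

theorem quiverGraph_adj_of_hom (hloops : ∀ a : V, IsEmpty (a ⟶ a)) {a b : Symmetrify V}
    (e : a ⟶ b) : (quiverGraph V).Adj a b := by
  rcases e with f | f
  · refine ⟨?_, Or.inl ⟨f⟩⟩
    rintro rfl; exact (hloops a).elim f
  · refine ⟨?_, Or.inr ⟨f⟩⟩
    rintro rfl; exact (hloops a).elim f

theorem edgeWeight_eq_dartWeight (hsingle : ∀ a b : V, Subsingleton ((a ⟶ b) ⊕ (b ⟶ a)))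
    {a b : Symmetrify V} (e : a ⟶ b) (hadj : (quiverGraph V).Adj a b) :
    edgeWeight e = dartWeight (⟨(a, b), hadj⟩ : (quiverGraph V).Dart) := by
  rcases e with f | f
  · exact ((dartWeight_of_hom hsingle ⟨(a, b), hadj⟩ f).1).symm
  · exact ((dartWeight_of_hom hsingle ⟨(b, a), hadj.symm⟩ f).2).symm

theorem exists_isPath_pathWeight_eq (hloops : ∀ a : V, IsEmpty (a ⟶ a))
    (hsingle : ∀ a b : V, Subsingleton ((a ⟶ b) ⊕ (b ⟶ a)))
    (hacyclic : (quiverGraph V).IsAcyclic) {i j : Symmetrify V} (ω : Path i j) :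
    ∃ q : (quiverGraph V).Walk i j, q.IsPath ∧ pathWeight ω = (q.darts.map dartWeight).sum := by
  classical
  induction ω with
  | nil => exact ⟨.nil, .nil, by rw [pathWeight]; rfl⟩
  | cons ω e ih =>
    obtain ⟨q, hq, hω⟩ := ih
    have hadj := quiverGraph_adj_of_hom hloops e
    refine ⟨(q.concat hadj).bypass, (q.concat hadj).bypass_isPath, ?_⟩
    rw [hacyclic.sum_map_darts_of_isPath_of_adj (dartWeight_symm hsingle) hq
      (q.concat hadj).bypass_isPath hadj, pathWeight, hω, edgeWeight_eq_dartWeight hsingle]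

end

/-- Let `Q` be a finite quiver with no loops and at most one arrow
between any two vertices (counting both directions), whose underlying simple graph is
acyclic.  If `ω` and `ω′` are two paths in the double quiver `Q̄` with the same source
and the same target, then `W(ω) = W(ω′)`: the weight `W` depends only on the
endpoints. -/
theorem pathWeight_well_defined
    (V : Type*) [Quiver V] [Fintype V] [∀ a b : V, Fintype (a ⟶ b)]
    (hloops : ∀ a : V, IsEmpty (a ⟶ a))
    (hsingle : ∀ a b : V, Subsingleton ((a ⟶ b) ⊕ (b ⟶ a)))
    (hacyclic : (quiverGraph V).IsAcyclic)
    (i j : Symmetrify V) (ω ω' : Path i j) :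
    pathWeight ω = pathWeight ω' := by
  obtain ⟨q, hq, hω⟩ := exists_isPath_pathWeight_eq hloops hsingle hacyclic ω
  obtain ⟨q', hq', hω'⟩ := exists_isPath_pathWeight_eq hloops hsingle hacyclic ω'
  obtain rfl : q = q' := Subtype.mk.inj <| (hacyclic.subsingleton_path i j).elim ⟨q, hq⟩ ⟨q', hq'⟩
  rw [hω, hω']
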